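/- Let G₆,₄ be the 6-dimensional real Lie algebra with basis x₁,…,x₆ and nonzero brackets [x₁,x₂]=x₄, [x₁,x₃]=x₆, [x₂,x₄]=x₅. For real α, β with α + β ≠ 0, the linear map J_{α,β} defined in the basis by the block-diagonal matrix diag( [[α,1],[−(α²+1),−α]], [[(1−αβ)/(α+β), 1],[−(α²+1)(β²+1)/(α+β)², (αβ−1)/(α+β)]], [[β, (α²+1)(β²+1)/(α+β)],[−(α+β)/(α²+1), −β]] ) satisfies J_{α,β}² = −1 and the Nijenhuis integrability condition. -/

import Mathlib

/-!
Each diagonal block of `J` has trace `0` and determinant `1`, so by Cayley–Hamilton it squares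
to `-1`. Once `J² = -1`, the Nijenhuis tensor is `J`-antilinear in each argument,
`N(JX, Y) = N(X, JY) = -J N(X, Y)`, so it vanishes as soon as it vanishes on a set `S` with
`S ∪ J S` spanning. For `S = {x₂, x₄, x₆}` (that is, `x '' {1, 3, 5}`) only `N(x₂, x₄)` involves a
nonzero bracket; the other pairs meet the central, `J`-invariant plane spanned by `x₅, x₆`.
-/

section Nijenhuis

variable {R L : Type*} [CommRing R] [LieRing L] [LieAlgebra R L]

def nijenhuis (J : L →ₗ[R] L) : L →ₗ[R] L →ₗ[R] L :=
  LinearMap.mk₂ R (fun X Y => ⁅J X, J Y⁆ - ⁅X, Y⁆ - J ⁅J X, Y⁆ - J ⁅X, J Y⁆)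
    (fun X X' Y => by simp only [map_add, add_lie]; abel)
    (fun c X Y => by simp only [map_smul, smul_lie, smul_sub])
    (fun X Y Y' => by simp only [map_add, lie_add]; abel)
    (fun c X Y => by simp only [map_smul, lie_smul, smul_sub])

variable (J : L →ₗ[R] L)

theorem nijenhuis_apply (X Y : L) :
    nijenhuis J X Y = ⁅J X, J Y⁆ - ⁅X, Y⁆ - J ⁅J X, Y⁆ - J ⁅X, J Y⁆ :=
  rfl

theorem nijenhuis_swap (X Y : L) : nijenhuis J Y X = -nijenhuis J X Y := by
  simp only [nijenhuis_apply, ← lie_skew Y, ← lie_skew (J Y), map_neg]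
  abel

theorem nijenhuis_self (X : L) : nijenhuis J X X = 0 := by
  simp only [nijenhuis_apply, lie_self, ← lie_skew X (J X), map_neg]
  abel

variable {J}

theorem nijenhuis_apply_left (hJ : ∀ X, J (J X) = -X) (X Y : L) :
    nijenhuis J (J X) Y = -J (nijenhuis J X Y) := by
  simp only [nijenhuis_apply, hJ, neg_lie, map_sub, map_neg]
  abel

theorem nijenhuis_apply_right (hJ : ∀ X, J (J X) = -X) (X Y : L) :
    nijenhuis J X (J Y) = -J (nijenhuis J X Y) := by
  rw [nijenhuis_swap, nijenhuis_apply_left hJ, nijenhuis_swap J Y, map_neg]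

theorem nijenhuis_eq_zero_of_span_eq_top (hJ : ∀ X, J (J X) = -X) {S : Set L}
    (hS : Submodule.span R (S ∪ J '' S) = ⊤) (h : ∀ s ∈ S, ∀ t ∈ S, nijenhuis J s t = 0) :
    nijenhuis J = 0 := by
  have hright : ∀ s ∈ S, ∀ v ∈ S ∪ J '' S, nijenhuis J s v = 0 := by
    rintro s hs v (hv | ⟨t, ht, rfl⟩)
    · exact h s hs v hv
    · rw [nijenhuis_apply_right hJ, h s hs t ht, map_zero, neg_zero]
  refine LinearMap.ext_on hS fun u hu => LinearMap.ext_on hS fun v hv => ?_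
  rcases hu with hu | ⟨s, hs, rfl⟩
  · exact hright u hu v hv
  · rw [nijenhuis_apply_left hJ, hright s hs v hv, map_zero, neg_zero]; rfl

end Nijenhuis

theorem LinearMap.apply_apply_eq_neg_of_trace_eq_zero_of_det_eq_one {R M : Type*} [CommRing R]
    [AddCommGroup M] [Module R M] {J : M →ₗ[R] M} {a b : M} {p q r s : R}
    (ha : J a = p • a + q • b) (hb : J b = r • a + s • b)
    (htrace : p + s = 0) (hdet : p * s - q * r = 1) : J (J a) = -a ∧ J (J b) = -b := by
  constructor
  · rw [ha, map_add, map_smul, map_smul, ha, hb]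
    match_scalars
    · linear_combination p * htrace - hdet
    · linear_combination q * htrace
  · rw [hb, map_add, map_smul, map_smul, ha, hb]
    match_scalars
    · linear_combination r * htrace
    · linear_combination s * htrace - hdet

theorem g64_Jalphabeta_integrable_general
    (L : Type*) [LieRing L] [LieAlgebra ℝ L]
    (x : Module.Basis (Fin 6) ℝ L)
    (h02 : ⁅x 0, x 2⁆ = x 5) (h13 : ⁅x 1, x 3⁆ = x 4)
    (h03 : ⁅x 0, x 3⁆ = 0) (h04 : ⁅x 0, x 4⁆ = 0) (h05 : ⁅x 0, x 5⁆ = 0)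
    (h12 : ⁅x 1, x 2⁆ = 0) (h14 : ⁅x 1, x 4⁆ = 0) (h15 : ⁅x 1, x 5⁆ = 0)
    (h24 : ⁅x 2, x 4⁆ = 0) (h25 : ⁅x 2, x 5⁆ = 0)
    (h34 : ⁅x 3, x 4⁆ = 0) (h35 : ⁅x 3, x 5⁆ = 0)
    (α β : ℝ) (hαβ : α + β ≠ 0)
    (J : L →ₗ[ℝ] L)
    (hJ0 : J (x 0) = α • x 0 + (-(α ^ 2 + 1)) • x 1)
    (hJ1 : J (x 1) = x 0 + (-α) • x 1)
    (hJ2 : J (x 2) = ((1 - α * β) / (α + β)) • x 2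
                    + (-((α ^ 2 + 1) * (β ^ 2 + 1) / (α + β) ^ 2)) • x 3)
    (hJ3 : J (x 3) = x 2 + ((α * β - 1) / (α + β)) • x 3)
    (hJ4 : J (x 4) = β • x 4 + (-((α + β) / (α ^ 2 + 1))) • x 5)
    (hJ5 : J (x 5) = ((α ^ 2 + 1) * (β ^ 2 + 1) / (α + β)) • x 4 + (-β) • x 5) :
    (∀ X : L, J (J X) = -X) ∧
    (∀ X Y : L, ⁅J X, J Y⁆ - ⁅X, Y⁆ - J ⁅J X, Y⁆ - J ⁅X, J Y⁆ = 0) := by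
  obtain ⟨hJJ0, hJJ1⟩ := J.apply_apply_eq_neg_of_trace_eq_zero_of_det_eq_one hJ0
    (by rw [hJ1, one_smul]) (by ring) (by ring)
  obtain ⟨hJJ2, hJJ3⟩ := J.apply_apply_eq_neg_of_trace_eq_zero_of_det_eq_one hJ2
    (by rw [hJ3, one_smul]) (by field_simp; ring) (by field_simp; ring)
  obtain ⟨hJJ4, hJJ5⟩ := J.apply_apply_eq_neg_of_trace_eq_zero_of_det_eq_one hJ4 hJ5
    (by ring) (by field_simp; ring)
  have hJJ : ∀ X, J (J X) = -X := by
    suffices J ∘ₗ J = -LinearMap.id from fun X => LinearMap.congr_fun this X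
    refine x.ext fun i => ?_
    fin_cases i <;> simpa
  refine ⟨hJJ, fun X Y => ?_⟩
  suffices nijenhuis J = 0 by simpa [nijenhuis_apply] using LinearMap.congr_fun₂ this X Y
  refine nijenhuis_eq_zero_of_span_eq_top hJJ (S := x '' {1, 3, 5}) ?_ ?_
  · set T := Submodule.span ℝ (x '' {1, 3, 5} ∪ J '' (x '' {1, 3, 5}))
    have hT : ∀ i ∈ ({1, 3, 5} : Set (Fin 6)), x i ∈ T ∧ J (x i) ∈ T := fun i hi =>
      ⟨Submodule.subset_span (Or.inl (Set.mem_image_of_mem x hi)),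
        Submodule.subset_span (Or.inr (Set.mem_image_of_mem J (Set.mem_image_of_mem x hi)))⟩
    obtain ⟨hx1, hJx1⟩ := hT 1 (by simp)
    obtain ⟨hx3, hJx3⟩ := hT 3 (by simp)
    obtain ⟨hx5, hJx5⟩ := hT 5 (by simp)
    have hc : (α ^ 2 + 1) * (β ^ 2 + 1) / (α + β) ≠ 0 := by positivity
    rw [eq_top_iff, ← x.span_eq, Submodule.span_le]
    rintro _ ⟨i, rfl⟩
    fin_cases i
    · exact (T.add_mem_iff_left (T.smul_mem _ hx1)).1 (hJ1 ▸ hJx1)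
    · exact hx1
    · exact (T.add_mem_iff_left (T.smul_mem _ hx3)).1 (hJ3 ▸ hJx3)
    · exact hx3
    · exact (T.smul_mem_iff hc).1 ((T.add_mem_iff_left (T.smul_mem _ hx5)).1 (hJ5 ▸ hJx5))
    · exact hx5
  · have hN13 : nijenhuis J (x 1) (x 3) = 0 := by
      simp only [nijenhuis_apply, hJ1, hJ3, hJ4, lie_add, add_lie, lie_smul, smul_lie, h02, h03,
        h12, h13, map_smul, smul_zero, add_zero, zero_add]
      match_scalars <;> field_simp <;> ring
    have hN15 : nijenhuis J (x 1) (x 5) = 0 := by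
      simp only [nijenhuis_apply, hJ1, hJ5, lie_add, add_lie, lie_smul, smul_lie, h04, h05,
        h14, h15, smul_zero, add_zero, sub_self, map_zero]
    have hN35 : nijenhuis J (x 3) (x 5) = 0 := by
      simp only [nijenhuis_apply, hJ3, hJ5, lie_add, add_lie, lie_smul, smul_lie, h24, h25,
        h34, h35, smul_zero, add_zero, sub_self, map_zero]
    simp only [Set.forall_mem_image, Set.mem_insert_iff, Set.mem_singleton_iff]
    rintro i (rfl | rfl | rfl) j (rfl | rfl | rfl) <;>
      simp only [nijenhuis_self, hN13, hN15, hN35, nijenhuis_swap J (x 1) (x 3),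
        nijenhuis_swap J (x 1) (x 5), nijenhuis_swap J (x 3) (x 5), neg_zero]

/-- On the Lie algebra `𝒢₆,₄` (`[x₁,x₂]=x₄, [x₁,x₃]=x₆, [x₂,x₄]=x₅`), for real
`α, β` with `α + β ≠ 0`, the block-diagonal map `J_{α,β}` is an integrable
almost complex structure. -/
theorem g64_Jalphabeta_integrable
    (L : Type*) [LieRing L] [LieAlgebra ℝ L]
    (x : Module.Basis (Fin 6) ℝ L)
    (h01 : ⁅x 0, x 1⁆ = x 3) (h02 : ⁅x 0, x 2⁆ = x 5) (h13 : ⁅x 1, x 3⁆ = x 4)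
    (h03 : ⁅x 0, x 3⁆ = 0) (h04 : ⁅x 0, x 4⁆ = 0) (h05 : ⁅x 0, x 5⁆ = 0)
    (h12 : ⁅x 1, x 2⁆ = 0) (h14 : ⁅x 1, x 4⁆ = 0) (h15 : ⁅x 1, x 5⁆ = 0)
    (h23 : ⁅x 2, x 3⁆ = 0) (h24 : ⁅x 2, x 4⁆ = 0) (h25 : ⁅x 2, x 5⁆ = 0)
    (h34 : ⁅x 3, x 4⁆ = 0) (h35 : ⁅x 3, x 5⁆ = 0) (h45 : ⁅x 4, x 5⁆ = 0)
    (α β : ℝ) (hαβ : α + β ≠ 0)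
    (J : L →ₗ[ℝ] L)
    (hJ0 : J (x 0) = α • x 0 + (-(α ^ 2 + 1)) • x 1)
    (hJ1 : J (x 1) = x 0 + (-α) • x 1)
    (hJ2 : J (x 2) = ((1 - α * β) / (α + β)) • x 2
                    + (-((α ^ 2 + 1) * (β ^ 2 + 1) / (α + β) ^ 2)) • x 3)
    (hJ3 : J (x 3) = x 2 + ((α * β - 1) / (α + β)) • x 3)
    (hJ4 : J (x 4) = β • x 4 + (-((α + β) / (α ^ 2 + 1))) • x 5)
    (hJ5 : J (x 5) = ((α ^ 2 + 1) * (β ^ 2 + 1) / (α + β)) • x 4 + (-β) • x 5) :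
    (∀ X : L, J (J X) = -X) ∧
    (∀ X Y : L, ⁅J X, J Y⁆ - ⁅X, Y⁆ - J ⁅J X, Y⁆ - J ⁅X, J Y⁆ = 0) :=
  g64_Jalphabeta_integrable_general L x h02 h13 h03 h04 h05 h12 h14 h15 h24 h25 h34 h35 α β hαβ J
    hJ0 hJ1 hJ2 hJ3 hJ4 hJ5
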